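/- arXiv:2210.08387 — 2 statements merged into one kernel-verified Lean document; each statement's English description precedes it below -/
import Mathlib

section
/- Let Y ∈ ℝ^{n×r} have full column rank and H ∈ H_Y with ‖H‖_F < σ_r(Y). If K = (Y+H)S for some skew-symmetric S ∈ ℝ^{r×r} and K ∈ H_Y (i.e., Yᵀ K symmetric), then K = 0. Equivalently, the intersection of the vertical space at Y+H with the horizontal space at Y is trivial. -/
open Matrix BigOperators

/-- Frobenius norm of a real matrix. -/
noncomputable def frobNorm {n r : ℕ} (A : Matrix (Fin n) (Fin r) ℝ) : ℝ :=
  Real.sqrt (∑ i, ∑ j, (A i j) ^ 2)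

/-- Smallest singular value of a real `n × r` matrix: the infimum of `‖Y x‖`
over Euclidean unit vectors `x`. -/
noncomputable def sigmaMin {n r : ℕ} (Y : Matrix (Fin n) (Fin r) ℝ) : ℝ :=
  sInf {c | ∃ x : Fin r → ℝ, (∑ j, (x j) ^ 2) = 1 ∧
    c = Real.sqrt (∑ i, (Y.mulVec x i) ^ 2)}

/-- Cauchy–Schwarz in sqrt form. -/
lemma cs_sqrt {m : ℕ} (f g : Fin m → ℝ) :
    -(Real.sqrt (∑ i, f i ^ 2) * Real.sqrt (∑ i, g i ^ 2)) ≤ ∑ i, f i * g i := by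
  have h := Finset.sum_mul_sq_le_sq_mul_sq Finset.univ f g
  have h1 : Real.sqrt (∑ i, f i ^ 2) ^ 2 = ∑ i, f i ^ 2 :=
    Real.sq_sqrt (Finset.sum_nonneg fun i _ => sq_nonneg _)
  have h2 : Real.sqrt (∑ i, g i ^ 2) ^ 2 = ∑ i, g i ^ 2 :=
    Real.sq_sqrt (Finset.sum_nonneg fun i _ => sq_nonneg _)
  set A := Real.sqrt (∑ i, f i ^ 2)
  set B := Real.sqrt (∑ i, g i ^ 2)
  have hAB : 0 ≤ A * B := mul_nonneg (Real.sqrt_nonneg _) (Real.sqrt_nonneg _)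
  have hsq : (∑ i, f i * g i) ^ 2 ≤ (A * B) ^ 2 := by rw [mul_pow, h1, h2]; exact h
  have habs : |∑ i, f i * g i| ≤ A * B := by
    calc |∑ i, f i * g i| = Real.sqrt ((∑ i, f i * g i) ^ 2) := (Real.sqrt_sq_eq_abs _).symm
      _ ≤ Real.sqrt ((A * B) ^ 2) := Real.sqrt_le_sqrt hsq
      _ = A * B := Real.sqrt_sq hAB
  linarith [neg_abs_le (∑ i, f i * g i)]

/-- `σ_min(Y) ‖x‖ ≤ ‖Yx‖`. -/
lemma sigmaMin_le {n r : ℕ} (Y : Matrix (Fin n) (Fin r) ℝ) (x : Fin r → ℝ) :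
    sigmaMin Y * Real.sqrt (∑ j, (x j) ^ 2) ≤ Real.sqrt (∑ i, (Y.mulVec x i) ^ 2) := by
  set s := Real.sqrt (∑ j, (x j) ^ 2) with hs
  have hs0 : 0 ≤ s := Real.sqrt_nonneg _
  rcases eq_or_lt_of_le hs0 with h0 | hpos
  · rw [← h0, mul_zero]
    exact Real.sqrt_nonneg _
  · have hsum : (∑ j, (x j) ^ 2) = s ^ 2 := by
      rw [hs, Real.sq_sqrt (Finset.sum_nonneg fun j _ => sq_nonneg _)]
    set u : Fin r → ℝ := s⁻¹ • x with hu
    have hu1 : (∑ j, (u j) ^ 2) = 1 := by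
      simp only [hu, Pi.smul_apply, smul_eq_mul, mul_pow, ← Finset.mul_sum, hsum]
      field_simp
    have hYu : Y.mulVec u = s⁻¹ • Y.mulVec x := by
      rw [hu, Matrix.mulVec_smul]
    have hmem : Real.sqrt (∑ i, (Y.mulVec u i) ^ 2) ∈
        {c | ∃ x : Fin r → ℝ, (∑ j, (x j) ^ 2) = 1 ∧
          c = Real.sqrt (∑ i, (Y.mulVec x i) ^ 2)} := ⟨u, hu1, rfl⟩
    have hbdd : BddBelow {c | ∃ x : Fin r → ℝ, (∑ j, (x j) ^ 2) = 1 ∧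
        c = Real.sqrt (∑ i, (Y.mulVec x i) ^ 2)} := by
      refine ⟨0, ?_⟩
      rintro c ⟨x, -, rfl⟩
      exact Real.sqrt_nonneg _
    have hle : sigmaMin Y ≤ Real.sqrt (∑ i, (Y.mulVec u i) ^ 2) := csInf_le hbdd hmem
    have hval : Real.sqrt (∑ i, (Y.mulVec u i) ^ 2) =
        s⁻¹ * Real.sqrt (∑ i, (Y.mulVec x i) ^ 2) := by
      have : (∑ i, (Y.mulVec u i) ^ 2) = s⁻¹ ^ 2 * ∑ i, (Y.mulVec x i) ^ 2 := by
        simp only [hYu, Pi.smul_apply, smul_eq_mul, mul_pow, ← Finset.mul_sum]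
      rw [this, Real.sqrt_mul (sq_nonneg _), Real.sqrt_sq (by positivity)]
    rw [hval] at hle
    calc sigmaMin Y * s ≤ (s⁻¹ * Real.sqrt (∑ i, (Y.mulVec x i) ^ 2)) * s := by
          exact mul_le_mul_of_nonneg_right hle hs0
      _ = Real.sqrt (∑ i, (Y.mulVec x i) ^ 2) := by field_simp
      _ ≤ _ := le_refl _

/-- `‖Hx‖ ≤ ‖H‖_F ‖x‖`. -/
lemma frobNorm_mulVec_le {n r : ℕ} (H : Matrix (Fin n) (Fin r) ℝ) (x : Fin r → ℝ) :
    Real.sqrt (∑ i, (H.mulVec x i) ^ 2) ≤ frobNorm H * Real.sqrt (∑ j, (x j) ^ 2) := by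
  have key : (∑ i, (H.mulVec x i) ^ 2) ≤ (∑ i, ∑ j, (H i j) ^ 2) * ∑ j, (x j) ^ 2 := by
    rw [Finset.sum_mul]
    refine Finset.sum_le_sum fun i _ => ?_
    exact Finset.sum_mul_sq_le_sq_mul_sq Finset.univ (fun j => H i j) x
  calc Real.sqrt (∑ i, (H.mulVec x i) ^ 2)
      ≤ Real.sqrt ((∑ i, ∑ j, (H i j) ^ 2) * ∑ j, (x j) ^ 2) := Real.sqrt_le_sqrt key
    _ = frobNorm H * Real.sqrt (∑ j, (x j) ^ 2) := by
        rw [frobNorm]; exact Real.sqrt_mul (Finset.sum_nonneg fun i _ =>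
          Finset.sum_nonneg fun j _ => sq_nonneg _) _

/-- The vertical space at `Y + H` intersects the horizontal space at `Y` trivially:
if `Y` has full column rank, `H ∈ H_Y` with `‖H‖_F < σ_r(Y)`, `K = (Y+H) S` with `S`
skew-symmetric, and `Yᵀ K` is symmetric, then `K = 0`. -/
theorem vertical_at_shift_meets_horizontal_trivially {n r : ℕ}
    (Y H K : Matrix (Fin n) (Fin r) ℝ) (S : Matrix (Fin r) (Fin r) ℝ)
    (hrank : Y.rank = r)
    (hH : Yᵀ * H = Hᵀ * Y) (hnorm : frobNorm H < sigmaMin Y)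
    (hS : Sᵀ = -S) (hK : K = (Y + H) * S)
    (hKhor : Yᵀ * K = Kᵀ * Y) :
    K = 0 := by
  set M : Matrix (Fin r) (Fin r) ℝ := Yᵀ * (Y + H) with hM
  -- Lyapunov equation M S = -(S M)
  have hLyap : M * S = -(S * M) := by
    have h1 : Yᵀ * K = M * S := by rw [hK, hM, Matrix.mul_assoc]
    have h2 : Kᵀ * Y = -(S * M) := by
      rw [hK, Matrix.transpose_mul, hS, Matrix.transpose_add, hM]
      rw [Matrix.neg_mul, Matrix.neg_mul, neg_inj]
      simp only [Matrix.mul_assoc, Matrix.add_mul, Matrix.mul_add, hH]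
    rw [h1, h2] at hKhor
    exact hKhor
  -- positive definiteness of M
  have hfrob0 : 0 ≤ frobNorm H := Real.sqrt_nonneg _
  have hPD : ∀ x : Fin r → ℝ, x ≠ 0 → 0 < x ⬝ᵥ M.mulVec x := by
    intro x hx
    have hquad : x ⬝ᵥ M.mulVec x =
        (∑ i, (Y.mulVec x i) ^ 2) + ∑ i, Y.mulVec x i * H.mulVec x i := by
      rw [hM, ← Matrix.mulVec_mulVec, Matrix.dotProduct_mulVec, Matrix.vecMul_transpose,
        Matrix.add_mulVec, dotProduct_add]
      congr 1
      simp [dotProduct, pow_two]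
    set a := Real.sqrt (∑ i, (Y.mulVec x i) ^ 2) with ha
    set b := Real.sqrt (∑ i, (H.mulVec x i) ^ 2) with hb
    set s := Real.sqrt (∑ j, (x j) ^ 2) with hs
    have hspos : 0 < s := by
      apply Real.sqrt_pos.mpr
      obtain ⟨j, hj⟩ : ∃ j, x j ≠ 0 := by
        by_contra h
        push_neg at h
        exact hx (funext h)
      exact Finset.sum_pos' (fun j _ => sq_nonneg _) ⟨j, Finset.mem_univ j, by positivity⟩
    have ha2 : a ^ 2 = ∑ i, (Y.mulVec x i) ^ 2 :=
      Real.sq_sqrt (Finset.sum_nonneg fun i _ => sq_nonneg _)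
    have hcs : -(a * b) ≤ ∑ i, Y.mulVec x i * H.mulVec x i := cs_sqrt _ _
    have hla : sigmaMin Y * s ≤ a := sigmaMin_le Y x
    have hlb : b ≤ frobNorm H * s := frobNorm_mulVec_le H x
    have hb0 : 0 ≤ b := Real.sqrt_nonneg _
    have hσ : 0 < sigmaMin Y := lt_of_le_of_lt hfrob0 hnorm
    have hapos : 0 < a := lt_of_lt_of_le (mul_pos hσ hspos) hla
    have hba : b < a := by nlinarith
    have hprod : 0 < a * (a - b) := mul_pos hapos (by linarith)
    rw [hquad, ← ha2]
    nlinarith [hprod, hcs]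
  -- trace argument: trace (Sᵀ * (M * S)) = 0
  have hSsq : S * Sᵀ = Sᵀ * S := by rw [hS]; simp [neg_mul, mul_neg]
  have htr : Matrix.trace (Sᵀ * (M * S)) = 0 := by
    have e1 : Sᵀ * (M * S) = -(Sᵀ * S * M) := by
      rw [hLyap]; simp [mul_assoc]
    have e2 : Matrix.trace (Sᵀ * (M * S)) = Matrix.trace (Sᵀ * S * M) := by
      rw [Matrix.trace_mul_comm, Matrix.mul_assoc, hSsq]
      exact Matrix.trace_mul_comm _ _
    have e3 : Matrix.trace (Sᵀ * (M * S)) = -Matrix.trace (Sᵀ * S * M) := by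
      rw [e1, Matrix.trace_neg]
    linarith [e2, e3]
  -- diagonal entries are the quadratic forms at columns of S
  have hdiag : ∀ j, (Sᵀ * (M * S)) j j = (fun i => S i j) ⬝ᵥ M.mulVec (fun i => S i j) := by
    intro j
    simp only [Matrix.mul_apply, Matrix.transpose_apply, dotProduct, Matrix.mulVec,
      dotProduct]
  have htrsum : (∑ j, (fun i => S i j) ⬝ᵥ M.mulVec (fun i => S i j)) = 0 := by
    rw [← htr, Matrix.trace]
    exact Finset.sum_congr rfl fun j _ => (hdiag j).symm
  have hcols : ∀ j, (fun i => S i j) = (0 : Fin r → ℝ) := by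
    intro j
    by_contra hc
    have hall : ∀ j' ∈ Finset.univ, (0:ℝ) ≤ (fun i => S i j') ⬝ᵥ M.mulVec (fun i => S i j') := by
      intro j' _
      by_cases h0 : (fun i => S i j') = (0 : Fin r → ℝ)
      · rw [h0]; simp
      · exact le_of_lt (hPD _ h0)
    have := (Finset.sum_eq_zero_iff_of_nonneg hall).mp htrsum j (Finset.mem_univ j)
    exact absurd this (ne_of_gt (hPD _ hc))
  have hS0 : S = 0 := by
    ext i j
    have := congrFun (hcols j) i
    simpa using this
  rw [hK, hS0, Matrix.mul_zero]
end

section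
/- With the notation of the previous statement, the horizontal lift H of X̃ satisfies the quantitative bound ‖H‖_F² ≤ (1/σ_r(Y)²)·‖X̃ − X‖_F² + √r · ‖X̃ − X‖_F. -/
open Matrix BigOperators

section Helpers

variable {m k : Type*} [Fintype m] [Fintype k]

lemma hlb_sum_sq_eq (A : Matrix m k ℝ) : ∑ i, ∑ j, A i j ^ 2 = (Aᵀ * A).trace := by
  simp only [Matrix.trace, Matrix.diag, Matrix.mul_apply, Matrix.transpose_apply, sq]
  rw [Finset.sum_comm]

lemma hlb_entry_trace (A B : Matrix m k ℝ) :
    ∑ i, ∑ j, A i j * B i j = (Aᵀ * B).trace := by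
  simp only [Matrix.trace, Matrix.diag, Matrix.mul_apply, Matrix.transpose_apply]
  rw [Finset.sum_comm]

lemma hlb_trace_nonneg (A : Matrix m k ℝ) : 0 ≤ (Aᵀ * A).trace := by
  rw [← hlb_sum_sq_eq]; positivity

lemma hlb_psd_tmul [DecidableEq k] (A : Matrix m k ℝ) : (Aᵀ * A).PosSemidef := by
  have := Matrix.posSemidef_conjTranspose_mul_self A
  rwa [Matrix.conjTranspose_eq_transpose_of_trivial] at this

lemma hlb_psd_factor {k : Type*} [Fintype k] [DecidableEq k] {A : Matrix k k ℝ}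
    (hA : A.PosSemidef) : ∃ B : Matrix k k ℝ, A = Bᵀ * B := by
  open scoped MatrixOrder in
  obtain ⟨B, hB⟩ := CStarAlgebra.nonneg_iff_eq_star_mul_self.mp hA.nonneg
  exact ⟨B, by rwa [Matrix.star_eq_conjTranspose, Matrix.conjTranspose_eq_transpose_of_trivial] at hB⟩

lemma hlb_trace_mul_nonneg {k : Type*} [Fintype k] [DecidableEq k] {A B : Matrix k k ℝ}
    (hA : A.PosSemidef) (hB : B.PosSemidef) : 0 ≤ (A * B).trace := by
  obtain ⟨A1, rfl⟩ := hlb_psd_factor hA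
  obtain ⟨B1, rfl⟩ := hlb_psd_factor hB
  have : (A1ᵀ * A1 * (B1ᵀ * B1)).trace = ((A1 * B1ᵀ)ᵀ * (A1 * B1ᵀ)).trace := by
    rw [Matrix.transpose_mul, Matrix.transpose_transpose,
        show A1ᵀ * A1 * (B1ᵀ * B1) = A1ᵀ * (A1 * (B1ᵀ * B1)) from by noncomm_ring,
        Matrix.trace_mul_comm A1ᵀ, Matrix.trace_mul_comm (B1 * A1ᵀ)]
    congr 1
    noncomm_ring
  rw [this]
  exact hlb_trace_nonneg _

lemma hlb_psd_trace_nonneg {k : Type*} [Fintype k] [DecidableEq k] {A : Matrix k k ℝ}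
    (hA : A.PosSemidef) : 0 ≤ A.trace := by
  obtain ⟨B, rfl⟩ := hlb_psd_factor hA
  exact hlb_trace_nonneg B

lemma hlb_cs (A B : Matrix m k ℝ) :
    (∑ i, ∑ j, A i j * B i j) ^ 2 ≤ (∑ i, ∑ j, A i j ^ 2) * (∑ i, ∑ j, B i j ^ 2) := by
  have := Finset.sum_mul_sq_le_sq_mul_sq Finset.univ
    (fun p : m × k => A p.1 p.2) (fun p : m × k => B p.1 p.2)
  rw [show (∑ i, ∑ j, A i j * B i j) = ∑ p : m × k, A p.1 p.2 * B p.1 p.2 from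
    (Fintype.sum_prod_type (f := fun p : m × k => A p.1 p.2 * B p.1 p.2)).symm,
    show (∑ i, ∑ j, A i j ^ 2) = ∑ p : m × k, A p.1 p.2 ^ 2 from
    (Fintype.sum_prod_type (f := fun p : m × k => A p.1 p.2 ^ 2)).symm,
    show (∑ i, ∑ j, B i j ^ 2) = ∑ p : m × k, B p.1 p.2 ^ 2 from
    (Fintype.sum_prod_type (f := fun p : m × k => B p.1 p.2 ^ 2)).symm]
  exact this

lemma hlb_mulVec_sq_le (A : Matrix m k ℝ) (v : k → ℝ) :
    ∑ i, (A.mulVec v i) ^ 2 ≤ (∑ i, ∑ j, A i j ^ 2) * ∑ j, v j ^ 2 := by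
  rw [Finset.sum_mul]
  apply Finset.sum_le_sum
  intro i _
  simpa [Matrix.mulVec, dotProduct] using
    Finset.sum_mul_sq_le_sq_mul_sq Finset.univ (fun j => A i j) v

lemma hlb_dot_G (Y : Matrix m k ℝ) (x : k → ℝ) :
    x ⬝ᵥ (Yᵀ * Y).mulVec x = ∑ i, (Y.mulVec x i) ^ 2 := by
  rw [← Matrix.mulVec_mulVec, Matrix.dotProduct_mulVec, Matrix.vecMul_transpose]
  simp [dotProduct, sq]

lemma hlb_dot_sq (v : k → ℝ) : ∑ j, v j ^ 2 = v ⬝ᵥ v := by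
  simp [dotProduct, sq]

lemma hlb_dot_self_nonneg (v : k → ℝ) : 0 ≤ v ⬝ᵥ v :=
  Finset.sum_nonneg fun i _ => mul_self_nonneg _

lemma hlb_dot_cs (x y : k → ℝ) : (x ⬝ᵥ y) ^ 2 ≤ (x ⬝ᵥ x) * (y ⬝ᵥ y) := by
  have h := Finset.sum_mul_sq_le_sq_mul_sq Finset.univ x y
  simp only [pow_two] at h ⊢
  simpa [dotProduct] using h

end Helpers

lemma hlb_sigma_bdd {n r : ℕ} (Y : Matrix (Fin n) (Fin r) ℝ) :
    BddBelow {c | ∃ x : Fin r → ℝ, (∑ j, (x j) ^ 2) = 1 ∧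
      c = Real.sqrt (∑ i, (Y.mulVec x i) ^ 2)} := by
  refine ⟨0, ?_⟩
  rintro c ⟨x, -, rfl⟩
  exact Real.sqrt_nonneg _

lemma hlb_sigma_nonneg {n r : ℕ} (Y : Matrix (Fin n) (Fin r) ℝ) : 0 ≤ sigmaMin Y := by
  apply Real.sInf_nonneg
  rintro c ⟨x, -, rfl⟩
  exact Real.sqrt_nonneg _

lemma hlb_sigma_sq_le {n r : ℕ} (Y : Matrix (Fin n) (Fin r) ℝ) (x : Fin r → ℝ) :
    sigmaMin Y ^ 2 * (∑ j, x j ^ 2) ≤ ∑ i, (Y.mulVec x i) ^ 2 := by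
  rcases eq_or_lt_of_le (show (0:ℝ) ≤ ∑ j, x j ^ 2 by positivity) with h0 | hpos
  · rw [← h0, mul_zero]
    positivity
  · set c : ℝ := ∑ j, x j ^ 2 with hc
    have hcne : c ≠ 0 := ne_of_gt hpos
    have hsqc : Real.sqrt c ^ 2 = c := Real.sq_sqrt hpos.le
    set u : Fin r → ℝ := (Real.sqrt c)⁻¹ • x with hu
    have hsum : ∑ j, u j ^ 2 = 1 := by
      simp only [hu, Pi.smul_apply, smul_eq_mul, mul_pow, ← Finset.mul_sum]
      rw [inv_pow, hsqc, inv_mul_cancel₀ hcne]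
    have hle : sigmaMin Y ≤ Real.sqrt (∑ i, (Y.mulVec u i) ^ 2) :=
      csInf_le (hlb_sigma_bdd Y) ⟨u, hsum, rfl⟩
    have hYu : ∑ i, (Y.mulVec u i) ^ 2 = c⁻¹ * ∑ i, (Y.mulVec x i) ^ 2 := by
      rw [hu, Matrix.mulVec_smul]
      simp only [Pi.smul_apply, smul_eq_mul, mul_pow, ← Finset.mul_sum, inv_pow, hsqc]
    have h2 : sigmaMin Y ^ 2 ≤ c⁻¹ * ∑ i, (Y.mulVec x i) ^ 2 := by
      calc sigmaMin Y ^ 2 ≤ Real.sqrt (∑ i, (Y.mulVec u i) ^ 2) ^ 2 :=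
            pow_le_pow_left₀ (hlb_sigma_nonneg Y) hle 2
        _ = ∑ i, (Y.mulVec u i) ^ 2 := Real.sq_sqrt (by positivity)
        _ = _ := hYu
    calc sigmaMin Y ^ 2 * c ≤ (c⁻¹ * ∑ i, (Y.mulVec x i) ^ 2) * c :=
          mul_le_mul_of_nonneg_right h2 hpos.le
      _ = ∑ i, (Y.mulVec x i) ^ 2 := by field_simp

lemma hlb_det_ne_zero {r : ℕ} {G : Matrix (Fin r) (Fin r) ℝ}
    (hGrank : G.rank = r) : G.det ≠ 0 := by
  intro hdet
  obtain ⟨v, hv, hGv⟩ := (Matrix.exists_mulVec_eq_zero_iff).mpr hdet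
  have hker : v ∈ LinearMap.ker G.mulVecLin := by
    simpa [Matrix.mulVecLin_apply] using hGv
  have hpos : 0 < Module.finrank ℝ (LinearMap.ker G.mulVecLin) :=
    Module.finrank_pos_iff_exists_ne_zero.mpr ⟨⟨v, hker⟩, by simpa using hv⟩
  have hsum := LinearMap.finrank_range_add_finrank_ker G.mulVecLin
  rw [Module.finrank_fin_fun] at hsum
  have : G.rank = Module.finrank ℝ (LinearMap.range G.mulVecLin) := rfl
  omega

lemma hlb_partB {n r : ℕ} (Y H : Matrix (Fin n) (Fin r) ℝ)
    (J : Matrix (Fin r) (Fin r) ℝ) (E : Matrix (Fin n) (Fin n) ℝ)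
    (hGJ : (Yᵀ*Y)*J = 1) (hJG : J*(Yᵀ*Y) = 1) (hJt : Jᵀ = J)
    (hJpsd : J.PosSemidef)
    (hSpsd : (Yᵀ*Y + Yᵀ*H).PosSemidef)
    (hHtY : Hᵀ*Y = Yᵀ*H)
    (hE : E = Y*Hᵀ + H*Yᵀ + H*Hᵀ)
    {σ : ℝ}
    (hBpsd : ((σ^2)⁻¹ • (1 : Matrix (Fin r) (Fin r) ℝ) - J).PosSemidef) :
    ((Yᵀ*H) * J * (Yᵀ*H)).trace ≤ (σ^2)⁻¹ * ∑ i, ∑ j, (E i j)^2 := by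
  set D := Yᵀ*H with hD
  set G := Yᵀ*Y with hG
  have hEt : Eᵀ = E := by
    rw [hE]
    simp only [Matrix.transpose_add, Matrix.transpose_mul, Matrix.transpose_transpose]
    abel
  have hDt : Dᵀ = D := by
    rw [hD, Matrix.transpose_mul, Matrix.transpose_transpose]; exact hHtY
  have hEsqnn : (0:ℝ) ≤ ∑ i, ∑ j, (E i j)^2 := by positivity
  have hYEY : Yᵀ*E*Y = G*D + D*G + D*D := by
    rw [hE, show Yᵀ*(Y*Hᵀ + H*Yᵀ + H*Hᵀ)*Y
        = (Yᵀ*Y)*(Hᵀ*Y) + (Yᵀ*H)*(Yᵀ*Y) + (Yᵀ*H)*(Hᵀ*Y) from by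
        simp only [Matrix.mul_add, Matrix.add_mul, Matrix.mul_assoc],
      hHtY, ← hD, ← hG]
  have hDJDpsd : (D*J*D).PosSemidef := by
    have h := hJpsd.conjTranspose_mul_mul_same D
    rwa [Matrix.conjTranspose_eq_transpose_of_trivial, hDt] at h
  have h1nn : 0 ≤ (D*J*D).trace := hlb_psd_trace_nonneg hDJDpsd
  have h5 : 0 ≤ (D*J*D*J*D).trace + (D*J*D).trace := by
    have h := hSpsd.conjTranspose_mul_mul_same (J*D)
    rw [Matrix.conjTranspose_eq_transpose_of_trivial, Matrix.transpose_mul, hJt, hDt] at h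
    have heq : D*J*(G+D)*(J*D) = D*J*D + D*J*D*J*D := by
      rw [show D*J*(G+D)*(J*D) = D*(J*G)*(J*D) + D*J*D*(J*D) from by
        simp only [Matrix.mul_add, Matrix.add_mul, Matrix.mul_assoc], hJG]
      simp only [Matrix.mul_one, Matrix.one_mul, Matrix.mul_assoc]
    have htr := hlb_psd_trace_nonneg h
    rw [heq, Matrix.trace_add] at htr
    linarith
  have hw2 : (D*J*D*J).trace ≤ (σ^2)⁻¹ * (D*J*D).trace := by
    have h0 := hlb_trace_mul_nonneg hDJDpsd hBpsd
    have heq : (D*J*D) * ((σ^2)⁻¹ • 1 - J) = (σ^2)⁻¹ • (D*J*D) - D*J*D*J := by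
      rw [Matrix.mul_sub, mul_smul_comm, Matrix.mul_one]
    rw [heq, Matrix.trace_sub, Matrix.trace_smul, smul_eq_mul] at h0
    linarith
  have hWt : (Y*J*D*J*Yᵀ)ᵀ = Y*J*D*J*Yᵀ := by
    simp only [Matrix.transpose_mul, Matrix.transpose_transpose, hJt, hDt]
    simp only [Matrix.mul_assoc]
  have hWW : ((Y*J*D*J*Yᵀ)ᵀ * (Y*J*D*J*Yᵀ)).trace = (D*J*D*J).trace := by
    rw [hWt,
      show (Y*J*D*J*Yᵀ)*(Y*J*D*J*Yᵀ) = (Y*J*D*J*(Yᵀ*Y)*J*D*J)*Yᵀ from by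
        simp only [Matrix.mul_assoc],
      Matrix.trace_mul_comm,
      show Yᵀ*(Y*J*D*J*(Yᵀ*Y)*J*D*J)
        = ((Yᵀ*Y)*J)*((D*(J*((Yᵀ*Y)*J)))*(D*J)) from by simp only [Matrix.mul_assoc],
      ← hG, hGJ]
    simp only [Matrix.one_mul, Matrix.mul_one]
    congr 1
    simp only [Matrix.mul_assoc]
  have hEW : (E * (Y*J*D*J*Yᵀ)).trace = 2*(D*J*D).trace + (D*J*D*J*D).trace := by
    rw [show E * (Y*J*D*J*Yᵀ) = (E*Y*(J*D*J))*Yᵀ from by simp only [Matrix.mul_assoc],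
      Matrix.trace_mul_comm,
      show Yᵀ*(E*Y*(J*D*J)) = (Yᵀ*E*Y)*(J*D*J) from by simp only [Matrix.mul_assoc],
      hYEY, Matrix.add_mul, Matrix.add_mul, Matrix.trace_add, Matrix.trace_add]
    have t1 : (G*D*(J*D*J)).trace = (D*J*D).trace := by
      rw [show G*D*(J*D*J) = G*(D*J*D*J) from by simp only [Matrix.mul_assoc],
        Matrix.trace_mul_comm,
        show D*J*D*J*G = D*J*D*(J*G) from by simp only [Matrix.mul_assoc], hJG,
        Matrix.mul_one]
    have t2 : (D*G*(J*D*J)).trace = (D*J*D).trace := by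
      rw [show D*G*(J*D*J) = D*((G*J)*(D*J)) from by simp only [Matrix.mul_assoc], hGJ,
        Matrix.one_mul, Matrix.trace_mul_comm]
    have t3 : (D*D*(J*D*J)).trace = (D*J*D*J*D).trace := by
      rw [show D*D*(J*D*J) = D*(D*J*D*J) from by simp only [Matrix.mul_assoc],
        Matrix.trace_mul_comm]
    rw [t1, t2, t3]
    ring
  have hCS : ((Eᵀ * (Y*J*D*J*Yᵀ)).trace)^2
      ≤ (∑ i, ∑ j, (E i j)^2) * ((Y*J*D*J*Yᵀ)ᵀ*(Y*J*D*J*Yᵀ)).trace := by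
    rw [← hlb_entry_trace, ← hlb_sum_sq_eq (Y*J*D*J*Yᵀ)]
    exact hlb_cs E (Y*J*D*J*Yᵀ)
  have hh1 : (D*J*D).trace ≤ (E*(Y*J*D*J*Yᵀ)).trace := by rw [hEW]; linarith
  have hEWnn : 0 ≤ (E*(Y*J*D*J*Yᵀ)).trace := le_trans h1nn hh1
  have hc2 : ((E*(Y*J*D*J*Yᵀ)).trace)^2
      ≤ (∑ i, ∑ j, (E i j)^2) * ((σ^2)⁻¹ * (D*J*D).trace) := by
    calc ((E*(Y*J*D*J*Yᵀ)).trace)^2 = ((Eᵀ*(Y*J*D*J*Yᵀ)).trace)^2 := by rw [hEt]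
      _ ≤ (∑ i, ∑ j, (E i j)^2) * ((Y*J*D*J*Yᵀ)ᵀ*(Y*J*D*J*Yᵀ)).trace := hCS
      _ = (∑ i, ∑ j, (E i j)^2) * (D*J*D*J).trace := by rw [hWW]
      _ ≤ _ := mul_le_mul_of_nonneg_left hw2 hEsqnn
  rcases eq_or_lt_of_le h1nn with h0 | hpos
  · rw [← h0]; positivity
  · have hmul : (D*J*D).trace * (D*J*D).trace
        ≤ ((σ^2)⁻¹ * (∑ i, ∑ j, (E i j)^2)) * (D*J*D).trace := by
      have hsq : (D*J*D).trace * (D*J*D).trace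
          ≤ (E*(Y*J*D*J*Yᵀ)).trace * (E*(Y*J*D*J*Yᵀ)).trace :=
        mul_le_mul hh1 hh1 h1nn hEWnn
      nlinarith [hc2]
    exact le_of_mul_le_mul_right hmul hpos

lemma hlb_partA {n r : ℕ} (Y H : Matrix (Fin n) (Fin r) ℝ)
    (J : Matrix (Fin r) (Fin r) ℝ) (E : Matrix (Fin n) (Fin n) ℝ)
    (hGJ : (Yᵀ*Y)*J = 1) (hJG : J*(Yᵀ*Y) = 1) (hJt : Jᵀ = J)
    (hJpsd : J.PosSemidef)
    (hHtY : Hᵀ*Y = Yᵀ*H)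
    (hE : E = Y*Hᵀ + H*Yᵀ + H*Hᵀ) :
    ∃ h2 : ℝ, 0 ≤ h2 ∧ (Hᵀ*H).trace = ((Yᵀ*H)*J*(Yᵀ*H)).trace + h2 ∧
      h2^2 ≤ (r:ℝ) * ∑ i, ∑ j, (E i j)^2 := by
  set D := Yᵀ*H with hD
  have hEt : Eᵀ = E := by
    rw [hE]
    simp only [Matrix.transpose_add, Matrix.transpose_mul, Matrix.transpose_transpose]
    abel
  have hDt : Dᵀ = D := by
    rw [hD, Matrix.transpose_mul, Matrix.transpose_transpose]; exact hHtY
  refine ⟨((H - Y*J*D)ᵀ*(H - Y*J*D)).trace, hlb_trace_nonneg _, ?_, ?_⟩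
  · have hsplit : (H - Y*J*D)ᵀ*(H - Y*J*D) = Hᵀ*H - D*J*D := by
      have e : (H - Y*J*D)ᵀ*(H - Y*J*D)
          = Hᵀ*H - (Hᵀ*Y)*(J*D) - (D*J)*(Yᵀ*H) + (D*(J*(Yᵀ*Y)))*(J*D) := by
        simp only [Matrix.transpose_sub, Matrix.transpose_mul, Matrix.transpose_transpose,
          hJt, hDt]
        simp only [Matrix.sub_mul, Matrix.mul_sub, Matrix.mul_assoc]
        abel
      rw [e, hHtY, ← hD, hJG, Matrix.mul_one]
      simp only [Matrix.mul_assoc]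
      abel
    rw [hsplit, Matrix.trace_sub]
    ring
  · have hPt : (Y*J*Yᵀ)ᵀ = Y*J*Yᵀ := by
      simp only [Matrix.transpose_mul, Matrix.transpose_transpose, hJt]
      simp only [Matrix.mul_assoc]
    have hQt : ((1:Matrix (Fin n) (Fin n) ℝ) - Y*J*Yᵀ)ᵀ = 1 - Y*J*Yᵀ := by
      rw [Matrix.transpose_sub, Matrix.transpose_one, hPt]
    have hPP : (Y*J*Yᵀ)*(Y*J*Yᵀ) = Y*J*Yᵀ := by
      rw [show (Y*J*Yᵀ)*(Y*J*Yᵀ) = Y*((J*(Yᵀ*Y))*(J*Yᵀ)) from by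
          simp only [Matrix.mul_assoc], hJG, Matrix.one_mul, ← Matrix.mul_assoc]
    have hQQ : ((1:Matrix (Fin n) (Fin n) ℝ) - Y*J*Yᵀ)*(1 - Y*J*Yᵀ) = 1 - Y*J*Yᵀ := by
      rw [Matrix.mul_sub, Matrix.sub_mul, Matrix.sub_mul, hPP]
      simp only [Matrix.mul_one, Matrix.one_mul]
      abel
    have hQY : ((1:Matrix (Fin n) (Fin n) ℝ) - Y*J*Yᵀ)*Y = 0 := by
      rw [Matrix.sub_mul, Matrix.one_mul,
        show (Y*J*Yᵀ)*Y = Y*(J*(Yᵀ*Y)) from by simp only [Matrix.mul_assoc],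
        hJG, Matrix.mul_one, sub_self]
    have hYtQ : Yᵀ*((1:Matrix (Fin n) (Fin n) ℝ) - Y*J*Yᵀ) = 0 := by
      rw [Matrix.mul_sub, Matrix.mul_one,
        show Yᵀ*(Y*J*Yᵀ) = ((Yᵀ*Y)*J)*Yᵀ from by simp only [Matrix.mul_assoc],
        hGJ, Matrix.one_mul, sub_self]
    have hNQ : H - Y*J*D = ((1:Matrix (Fin n) (Fin n) ℝ) - Y*J*Yᵀ)*H := by
      rw [Matrix.sub_mul, Matrix.one_mul, hD]
      simp only [Matrix.mul_assoc]
    have hPpsd : (Y*J*Yᵀ).PosSemidef := by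
      have h := hJpsd.mul_mul_conjTranspose_same Y
      rwa [Matrix.conjTranspose_eq_transpose_of_trivial] at h
    have hQpsd : ((1:Matrix (Fin n) (Fin n) ℝ) - Y*J*Yᵀ).PosSemidef := by
      have h := hlb_psd_tmul ((1:Matrix (Fin n) (Fin n) ℝ) - Y*J*Yᵀ)
      rwa [hQt, hQQ] at h
    have hNNt : (H - Y*J*D)*(H - Y*J*D)ᵀ
        = ((1:Matrix (Fin n) (Fin n) ℝ) - Y*J*Yᵀ)*E*(1 - Y*J*Yᵀ) := by
      rw [hNQ, Matrix.transpose_mul, hQt, hE]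
      rw [show ((1:Matrix (Fin n) (Fin n) ℝ) - Y*J*Yᵀ)*(Y*Hᵀ + H*Yᵀ + H*Hᵀ)*(1 - Y*J*Yᵀ)
          = (((1:Matrix (Fin n) (Fin n) ℝ) - Y*J*Yᵀ)*Y)*(Hᵀ*(1 - Y*J*Yᵀ))
            + ((1 - Y*J*Yᵀ)*H)*(Yᵀ*(1 - Y*J*Yᵀ))
            + ((1 - Y*J*Yᵀ)*H)*(Hᵀ*(1 - Y*J*Yᵀ)) from by
          simp only [Matrix.mul_add, Matrix.add_mul, Matrix.mul_assoc],
        hQY, hYtQ, Matrix.zero_mul, Matrix.mul_zero]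
      simp only [zero_add, add_zero, Matrix.mul_assoc]
    set N := H - Y*J*D with hN
    have hMt : (Nᵀ*N)ᵀ = Nᵀ*N := by
      rw [Matrix.transpose_mul, Matrix.transpose_transpose]
    have step_a : ((Nᵀ*N).trace)^2 ≤ (r:ℝ) * ∑ i, ((Nᵀ*N) i i)^2 := by
      have hcs := Finset.sum_mul_sq_le_sq_mul_sq Finset.univ
        (fun _ : Fin r => (1:ℝ)) (fun i => (Nᵀ*N) i i)
      simp only [one_pow, one_mul, mul_one, Finset.sum_const, Finset.card_univ,
        Fintype.card_fin, nsmul_eq_mul] at hcs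
      have : (Nᵀ*N).trace = ∑ i, (Nᵀ*N) i i := by
        simp [Matrix.trace, Matrix.diag]
      rw [this]
      exact hcs
    have step_b : ∑ i, ((Nᵀ*N) i i)^2 ≤ ∑ i, ∑ j, ((Nᵀ*N) i j)^2 := by
      apply Finset.sum_le_sum
      intro i _
      exact Finset.single_le_sum (f := fun j => ((Nᵀ*N) i j)^2)
        (fun j _ => sq_nonneg _) (Finset.mem_univ i)
    have step_c : ∑ i, ∑ j, ((Nᵀ*N) i j)^2 = ((Nᵀ*N)*(Nᵀ*N)).trace := by
      rw [hlb_sum_sq_eq, hMt]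
    have step_d : ((Nᵀ*N)*(Nᵀ*N)).trace = ((N*Nᵀ)*(N*Nᵀ)).trace := by
      rw [show (Nᵀ*N)*(Nᵀ*N) = Nᵀ*(N*(Nᵀ*N)) from by simp only [Matrix.mul_assoc],
        Matrix.trace_mul_comm]
      congr 1
      simp only [Matrix.mul_assoc]
    have htr1 : ((N*Nᵀ)*(N*Nᵀ)).trace
        = (E*((1:Matrix (Fin n) (Fin n) ℝ) - Y*J*Yᵀ)*E*(1 - Y*J*Yᵀ)).trace := by
      rw [hNNt]
      rw [show (((1:Matrix (Fin n) (Fin n) ℝ) - Y*J*Yᵀ)*E*(1 - Y*J*Yᵀ))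
            *((1 - Y*J*Yᵀ)*E*(1 - Y*J*Yᵀ))
          = (1 - Y*J*Yᵀ)*(E*((1 - Y*J*Yᵀ)*(1 - Y*J*Yᵀ))*(E*(1 - Y*J*Yᵀ))) from by
          simp only [Matrix.mul_assoc], hQQ, Matrix.trace_mul_comm]
      rw [show E*((1:Matrix (Fin n) (Fin n) ℝ) - Y*J*Yᵀ)*(E*(1 - Y*J*Yᵀ))*(1 - Y*J*Yᵀ)
          = E*(1 - Y*J*Yᵀ)*(E*((1 - Y*J*Yᵀ)*(1 - Y*J*Yᵀ))) from by
          simp only [Matrix.mul_assoc], hQQ]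
      congr 1
      simp only [Matrix.mul_assoc]
    have hEQE : (E*((1:Matrix (Fin n) (Fin n) ℝ) - Y*J*Yᵀ)*E).PosSemidef := by
      have h := hQpsd.conjTranspose_mul_mul_same E
      rwa [Matrix.conjTranspose_eq_transpose_of_trivial, hEt] at h
    have hEPE : (E*(Y*J*Yᵀ)*E).PosSemidef := by
      have h := hPpsd.conjTranspose_mul_mul_same E
      rwa [Matrix.conjTranspose_eq_transpose_of_trivial, hEt] at h
    have ineq1 : (E*((1:Matrix (Fin n) (Fin n) ℝ) - Y*J*Yᵀ)*E*(1 - Y*J*Yᵀ)).trace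
        ≤ (E*((1:Matrix (Fin n) (Fin n) ℝ) - Y*J*Yᵀ)*E).trace := by
      have h0 := hlb_trace_mul_nonneg hEQE hPpsd
      have hsum : (E*((1:Matrix (Fin n) (Fin n) ℝ) - Y*J*Yᵀ)*E*(Y*J*Yᵀ)).trace
          + (E*((1:Matrix (Fin n) (Fin n) ℝ) - Y*J*Yᵀ)*E*(1 - Y*J*Yᵀ)).trace
          = (E*((1:Matrix (Fin n) (Fin n) ℝ) - Y*J*Yᵀ)*E).trace := by
        rw [← Matrix.trace_add, ← Matrix.mul_add,
          show (Y*J*Yᵀ) + ((1:Matrix (Fin n) (Fin n) ℝ) - Y*J*Yᵀ) = 1 from by abel,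
          Matrix.mul_one]
      linarith
    have ineq2 : (E*((1:Matrix (Fin n) (Fin n) ℝ) - Y*J*Yᵀ)*E).trace ≤ (E*E).trace := by
      have h0 := hlb_psd_trace_nonneg hEPE
      have hsum2 : (E*(Y*J*Yᵀ)*E).trace
          + (E*((1:Matrix (Fin n) (Fin n) ℝ) - Y*J*Yᵀ)*E).trace = (E*E).trace := by
        rw [← Matrix.trace_add, ← Matrix.add_mul, ← Matrix.mul_add,
          show (Y*J*Yᵀ) + ((1:Matrix (Fin n) (Fin n) ℝ) - Y*J*Yᵀ) = 1 from by abel,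
          Matrix.mul_one]
      linarith
    have hEE : (E*E).trace = ∑ i, ∑ j, (E i j)^2 := by
      rw [hlb_sum_sq_eq, hEt]
    calc ((Nᵀ*N).trace)^2 ≤ (r:ℝ) * ∑ i, ((Nᵀ*N) i i)^2 := step_a
      _ ≤ (r:ℝ) * ∑ i, ∑ j, ((Nᵀ*N) i j)^2 := by
          apply mul_le_mul_of_nonneg_left step_b (by positivity)
      _ = (r:ℝ) * ((N*Nᵀ)*(N*Nᵀ)).trace := by rw [step_c, step_d]
      _ ≤ (r:ℝ) * ∑ i, ∑ j, (E i j)^2 := by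
          apply mul_le_mul_of_nonneg_left _ (by positivity)
          rw [htr1, ← hEE]
          exact le_trans ineq1 ineq2

set_option maxHeartbeats 1000000 in
/-- Quantitative bound on the horizontal lift: if `X = Y Yᵀ` with `Y` of full
column rank, `H` is horizontal with `Yᵀ(Y + H) = YᵀY + YᵀH` positive semidefinite
(as produced by the polar-decomposition construction), and `X̃ = (Y+H)(Y+H)ᵀ`,
then `‖H‖_F² ≤ ‖X̃ − X‖_F²/σ_r(Y)² + √r ‖X̃ − X‖_F`. -/
theorem horizontal_lift_bound {n r : ℕ}
    (Y H : Matrix (Fin n) (Fin r) ℝ) (Xt : Matrix (Fin n) (Fin n) ℝ)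
    (hrank : Y.rank = r) (hpolar : (Yᵀ * Y + Yᵀ * H).PosSemidef)
    (hXt : Xt = (Y + H) * (Y + H)ᵀ) :
    frobNorm H ^ 2 ≤ (1 / sigmaMin Y ^ 2) * frobNorm (Xt - Y * Yᵀ) ^ 2 +
      Real.sqrt r * frobNorm (Xt - Y * Yᵀ) := by
  rcases Nat.eq_zero_or_pos r with hr0 | hrpos
  · subst hr0
    simp only [frobNorm, Finset.univ_eq_empty, Finset.sum_empty, Finset.sum_const_zero,
      Real.sqrt_zero, Nat.cast_zero, zero_mul, add_zero]
    norm_num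
    positivity
  · -- full column rank ⇒ G = YᵀY invertible
    have hGrank : (Yᵀ*Y).rank = r := by rw [Matrix.rank_transpose_mul_self, hrank]
    have hdet : (Yᵀ*Y).det ≠ 0 := hlb_det_ne_zero hGrank
    have hu : IsUnit (Yᵀ*Y).det := isUnit_iff_ne_zero.mpr hdet
    obtain ⟨J, hGJ, hJG, hJt⟩ : ∃ J : Matrix (Fin r) (Fin r) ℝ,
        (Yᵀ*Y)*J = 1 ∧ J*(Yᵀ*Y) = 1 ∧ Jᵀ = J := by
      refine ⟨(Yᵀ*Y)⁻¹, Matrix.mul_nonsing_inv _ hu, Matrix.nonsing_inv_mul _ hu, ?_⟩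
      rw [Matrix.transpose_nonsing_inv]
      congr 1
      rw [Matrix.transpose_mul, Matrix.transpose_transpose]
    have hGpsd : (Yᵀ*Y).PosSemidef := hlb_psd_tmul Y
    have hJpsd : J.PosSemidef := by
      have h := hGpsd.conjTranspose_mul_mul_same J
      rw [Matrix.conjTranspose_eq_transpose_of_trivial, hJt,
        show J*(Yᵀ*Y)*J = (J*(Yᵀ*Y))*J from rfl, hJG, Matrix.one_mul] at h
      exact h
    have hHtY : Hᵀ*Y = Yᵀ*H := by
      have h := hpolar.isHermitian
      rw [Matrix.IsHermitian, Matrix.conjTranspose_eq_transpose_of_trivial,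
        Matrix.transpose_add, Matrix.transpose_mul, Matrix.transpose_mul,
        Matrix.transpose_transpose] at h
      exact add_left_cancel h
    -- positivity of sigmaMin
    have hσnn := hlb_sigma_nonneg Y
    have hσpos : 0 < sigmaMin Y := by
      set sJ := ∑ i, ∑ j, (J i j)^2 with hsJ
      set sYt := ∑ i, ∑ j, ((Yᵀ) i j)^2 with hsYt
      have hsJnn : 0 ≤ sJ := by rw [hsJ]; positivity
      have hsYtnn : 0 ≤ sYt := by rw [hsYt]; positivity
      have hkey : ∀ x : Fin r → ℝ, (∑ j, x j ^ 2) = 1 →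
          1 ≤ (sJ * sYt) * ∑ i, (Y.mulVec x i)^2 := by
        intro x hx
        have hx1 : J.mulVec ((Yᵀ).mulVec (Y.mulVec x)) = x := by
          rw [Matrix.mulVec_mulVec, Matrix.mulVec_mulVec, Matrix.mul_assoc, hJG,
            Matrix.one_mulVec]
        have h1 : ∑ j, x j ^ 2 ≤ sJ * ∑ i, ((Yᵀ).mulVec (Y.mulVec x) i)^2 := by
          conv_lhs => rw [← hx1]
          rw [hsJ]
          exact hlb_mulVec_sq_le J _
        have h2 : ∑ i, ((Yᵀ).mulVec (Y.mulVec x) i)^2 ≤ sYt * ∑ i, (Y.mulVec x i)^2 := by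
          rw [hsYt]
          exact hlb_mulVec_sq_le (Yᵀ) _
        calc (1:ℝ) = ∑ j, x j ^ 2 := hx.symm
          _ ≤ sJ * ∑ i, ((Yᵀ).mulVec (Y.mulVec x) i)^2 := h1
          _ ≤ sJ * (sYt * ∑ i, (Y.mulVec x i)^2) :=
              mul_le_mul_of_nonneg_left h2 hsJnn
          _ = (sJ * sYt) * ∑ i, (Y.mulVec x i)^2 := by ring
      have hx0 : (∑ j, (Pi.single (⟨0, hrpos⟩ : Fin r) (1:ℝ)) j ^ 2) = (1:ℝ) := by
        simp [Pi.single_apply]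
      have hne : {c | ∃ x : Fin r → ℝ, (∑ j, (x j) ^ 2) = 1 ∧
          c = Real.sqrt (∑ i, (Y.mulVec x i) ^ 2)}.Nonempty :=
        ⟨_, ⟨_, hx0, rfl⟩⟩
      have hprod : 0 < sJ * sYt := by
        rcases lt_or_ge 0 (sJ * sYt) with h | h
        · exact h
        · exfalso
          have h1 := hkey _ hx0
          have h2 : (0:ℝ) ≤ ∑ i,
              (Y.mulVec (Pi.single (⟨0, hrpos⟩ : Fin r) (1:ℝ)) i)^2 := by positivity
          nlinarith
      have hlb : ∀ c ∈ {c | ∃ x : Fin r → ℝ, (∑ j, (x j) ^ 2) = 1 ∧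
          c = Real.sqrt (∑ i, (Y.mulVec x i) ^ 2)}, Real.sqrt ((sJ*sYt)⁻¹) ≤ c := by
        rintro c ⟨x, hx, rfl⟩
        apply Real.sqrt_le_sqrt
        rw [inv_eq_one_div, div_le_iff₀ hprod]
        linarith [hkey x hx]
      have hσlb : Real.sqrt ((sJ*sYt)⁻¹) ≤ sigmaMin Y := by
        unfold sigmaMin
        exact le_csInf hne hlb
      have hpos : 0 < Real.sqrt ((sJ*sYt)⁻¹) := Real.sqrt_pos.mpr (by positivity)
      linarith
    -- quadratic form bound for J
    have hJbound : ∀ x : Fin r → ℝ,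
        x ⬝ᵥ J.mulVec x ≤ (sigmaMin Y ^ 2)⁻¹ * (x ⬝ᵥ x) := by
      intro x
      have hyx : (Yᵀ*Y).mulVec (J.mulVec x) = x := by
        rw [Matrix.mulVec_mulVec, hGJ, Matrix.one_mulVec]
      have ht0 : 0 ≤ x ⬝ᵥ J.mulVec x := by
        have h := hJpsd.dotProduct_mulVec_nonneg x
        rwa [star_trivial] at h
      have hXnn : 0 ≤ x ⬝ᵥ x := hlb_dot_self_nonneg x
      have hYnn : 0 ≤ J.mulVec x ⬝ᵥ J.mulVec x := hlb_dot_self_nonneg _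
      have hq : sigmaMin Y ^ 2 * (J.mulVec x ⬝ᵥ J.mulVec x) ≤ x ⬝ᵥ J.mulVec x := by
        have h1 := hlb_sigma_sq_le Y (J.mulVec x)
        rw [hlb_dot_sq, ← hlb_dot_G, hyx, dotProduct_comm (J.mulVec x) x] at h1
        exact h1
      have hcs : (x ⬝ᵥ J.mulVec x)^2 ≤ (x ⬝ᵥ x) * (J.mulVec x ⬝ᵥ J.mulVec x) :=
        hlb_dot_cs x _
      rcases eq_or_lt_of_le ht0 with h0 | hpos'
      · rw [← h0]
        positivity
      · have h4 : sigmaMin Y ^ 2 * (x ⬝ᵥ J.mulVec x) ≤ x ⬝ᵥ x := by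
          have a1 : sigmaMin Y ^ 2 * (x ⬝ᵥ J.mulVec x)^2
              ≤ sigmaMin Y ^ 2 * ((x ⬝ᵥ x) * (J.mulVec x ⬝ᵥ J.mulVec x)) :=
            mul_le_mul_of_nonneg_left hcs (sq_nonneg _)
          have a2 : (x ⬝ᵥ x) * (sigmaMin Y ^ 2 * (J.mulVec x ⬝ᵥ J.mulVec x))
              ≤ (x ⬝ᵥ x) * (x ⬝ᵥ J.mulVec x) :=
            mul_le_mul_of_nonneg_left hq hXnn
          have hstep : sigmaMin Y ^ 2 * (x ⬝ᵥ J.mulVec x) * (x ⬝ᵥ J.mulVec x)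
              ≤ (x ⬝ᵥ x) * (x ⬝ᵥ J.mulVec x) := by nlinarith [a1, a2]
          exact le_of_mul_le_mul_right hstep hpos'
        calc x ⬝ᵥ J.mulVec x
            = (sigmaMin Y ^ 2)⁻¹ * (sigmaMin Y ^ 2 * (x ⬝ᵥ J.mulVec x)) := by
              field_simp
          _ ≤ (sigmaMin Y ^ 2)⁻¹ * (x ⬝ᵥ x) :=
              mul_le_mul_of_nonneg_left h4 (by positivity)
    have hBpsd : ((sigmaMin Y ^ 2)⁻¹ • (1 : Matrix (Fin r) (Fin r) ℝ) - J).PosSemidef := by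
      apply Matrix.PosSemidef.of_dotProduct_mulVec_nonneg
      · show _ᴴ = _
        rw [Matrix.conjTranspose_eq_transpose_of_trivial, Matrix.transpose_sub,
          Matrix.transpose_smul, Matrix.transpose_one, hJt]
      · intro x
        rw [star_trivial, Matrix.sub_mulVec, Matrix.smul_mulVec, Matrix.one_mulVec,
          dotProduct_sub, dotProduct_smul, smul_eq_mul]
        linarith [hJbound x]
    have hE : Xt - Y*Yᵀ = Y*Hᵀ + H*Yᵀ + H*Hᵀ := by
      rw [hXt, Matrix.transpose_add]
      simp only [Matrix.add_mul, Matrix.mul_add]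
      abel
    obtain ⟨h2, h2nn, hsplit, hbound⟩ :=
      hlb_partA Y H J (Xt - Y*Yᵀ) hGJ hJG hJt hJpsd hHtY hE
    have hB := hlb_partB Y H J (Xt - Y*Yᵀ) hGJ hJG hJt hJpsd hpolar hHtY hE hBpsd
    have hEsqnn : (0:ℝ) ≤ ∑ i, ∑ j, ((Xt - Y*Yᵀ) i j)^2 := by positivity
    have hfE2 : frobNorm (Xt - Y*Yᵀ) ^ 2 = ∑ i, ∑ j, ((Xt - Y*Yᵀ) i j)^2 := by
      rw [frobNorm, Real.sq_sqrt hEsqnn]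
    have hfH2 : frobNorm H ^ 2 = (Hᵀ*H).trace := by
      rw [frobNorm, Real.sq_sqrt (by positivity), hlb_sum_sq_eq]
    have hh2 : h2 ≤ Real.sqrt r * frobNorm (Xt - Y*Yᵀ) := by
      rw [show h2 = Real.sqrt (h2^2) from (Real.sqrt_sq h2nn).symm]
      calc Real.sqrt (h2^2)
          ≤ Real.sqrt ((r:ℝ) * ∑ i, ∑ j, ((Xt - Y*Yᵀ) i j)^2) := Real.sqrt_le_sqrt hbound
        _ = Real.sqrt r * frobNorm (Xt - Y*Yᵀ) := by
            rw [Real.sqrt_mul (by positivity), frobNorm]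
    have hgoal1 : ((Yᵀ*H)*J*(Yᵀ*H)).trace
        ≤ (1 / sigmaMin Y ^ 2) * frobNorm (Xt - Y*Yᵀ) ^ 2 := by
      rw [one_div, hfE2]
      exact hB
    rw [hfH2, hsplit]
    linarith
end
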